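/- Let i ≤ j' and k, n be integers, and set j(r̃) = k − j' + r̃ − n. With conventions C(a,b) = 0 unless 0 ≤ b ≤ a and 1/m! = 0 for m < 0, the function g(r̃) = C(j', j(r̃))·C(j(r̃), i)/(r̃!·(j'−i−r̃)!) is symmetric under the substitution r̃ ↦ 2j' − (k − n) − r̃, i.e., g(r̃) = g(2j' − (k − n) − r̃) for all integers r̃. -/

import Mathlib

/-!
Writing `m = k - j' + r - n`, the multinomial identity
`C(j', m) C(m, i) = j'! / (i! (m - i)! (j' - m)!)` holds for all integers once `1/x! = 0` for
`x < 0`, since both sides vanish outside `0 ≤ i ≤ m ≤ j'`. Hence `g r` is `j'!/i!` times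
`1/x!` over the four integers `m - i, j' - m, r, j' - i - r`, and the substitution
`r ↦ j' - m` (which sends `m` to `j' - r`) merely permutes them.
-/

/-- Binomial coefficient `C(a,b)` for integer arguments, zero unless `0 ≤ b ≤ a`. -/
noncomputable def zchoose (a b : ℤ) : ℚ :=
  if 0 ≤ b ∧ b ≤ a then (Nat.choose a.toNat b.toNat : ℚ) else 0

/-- `1/m!` for integer `m`, zero when `m < 0`. -/
noncomputable def invFact (m : ℤ) : ℚ :=
  if 0 ≤ m then 1 / (Nat.factorial m.toNat : ℚ) else 0

open Nat

lemma invFact_of_neg {m : ℤ} (h : m < 0) : invFact m = 0 :=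
  if_neg (by omega)

lemma invFact_natCast (m : ℕ) : invFact m = ((m ! : ℚ))⁻¹ := by
  simp [invFact]

lemma invFact_mul_factorial {m : ℤ} (h : 0 ≤ m) : invFact m * (m.toNat ! : ℚ) = 1 := by
  lift m to ℕ using h
  rw [invFact_natCast, Int.toNat_natCast, inv_mul_cancel₀ (by positivity)]

lemma zchoose_eq_factorial_mul_invFact (a b : ℤ) :
    zchoose a b = a.toNat ! * invFact b * invFact (a - b) := by
  by_cases h : 0 ≤ b ∧ b ≤ a
  · rw [zchoose, if_pos h]
    obtain ⟨hb, hba⟩ := h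
    lift a to ℕ using hb.trans hba
    lift b to ℕ using hb
    have hle : b ≤ a := by exact_mod_cast hba
    rw [← Nat.cast_sub hle, invFact_natCast, invFact_natCast,
      Int.toNat_natCast, Int.toNat_natCast, Nat.cast_choose ℚ hle]
    field_simp
  · rw [zchoose, if_neg h]
    rcases not_and_or.mp h with h | h
    · rw [invFact_of_neg (by omega)]; ring
    · rw [invFact_of_neg (m := a - b) (by omega)]; ring

lemma zchoose_mul_zchoose (a b c : ℤ) :
    zchoose a b * zchoose b c = a.toNat ! * invFact c * invFact (b - c) * invFact (a - b) := by
  rcases lt_or_ge b 0 with hb | hb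
  · have : zchoose b c = 0 := if_neg (by omega)
    rcases lt_or_ge c 0 with hc | hc
    · rw [this, invFact_of_neg hc]; ring
    · rw [this, invFact_of_neg (m := b - c) (by omega)]; ring
  · rw [zchoose_eq_factorial_mul_invFact a b, zchoose_eq_factorial_mul_invFact b c]
    linear_combination
      (a.toNat ! : ℚ) * invFact (a - b) * invFact c * invFact (b - c) * invFact_mul_factorial hb

lemma zchoose_mul_zchoose_mul_invFact_symm (a c m r : ℤ) :
    zchoose a m * zchoose m c * invFact r * invFact (a - c - r)
      = zchoose a (a - r) * zchoose (a - r) c * invFact (a - m) * invFact (m - c) := by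
  rw [zchoose_mul_zchoose, zchoose_mul_zchoose, sub_sub_cancel, sub_right_comm]
  ring

theorem stmt_16_general (i j' k n : ℤ)
    (g : ℤ → ℚ)
    (hg : ∀ r : ℤ, g r = zchoose j' (k - j' + r - n) * zchoose (k - j' + r - n) i
        * invFact r * invFact (j' - i - r)) :
    ∀ r : ℤ, g r = g (2 * j' - (k - n) - r) := by
  intro r
  have hm : k - j' + (2 * j' - (k - n) - r) - n = j' - r := by ring
  have hs : j' - i - (2 * j' - (k - n) - r) = k - j' + r - n - i := by ring
  have hr : 2 * j' - (k - n) - r = j' - (k - j' + r - n) := by ring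
  rw [hg, hg, hm, hs, hr]
  exact zchoose_mul_zchoose_mul_invFact_symm j' i (k - j' + r - n) r

theorem stmt_16 (i j' k n : ℤ) (hij : i ≤ j')
    (g : ℤ → ℚ)
    (hg : ∀ r : ℤ, g r = zchoose j' (k - j' + r - n) * zchoose (k - j' + r - n) i
        * invFact r * invFact (j' - i - r)) :
    ∀ r : ℤ, g r = g (2 * j' - (k - n) - r) :=
  stmt_16_general i j' k n g hg
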